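/- arXiv:2509.24874 — 2 statements merged into one kernel-verified Lean document; each statement's English description precedes it below -/
import Mathlib

section
/- There exist constants c₁, c₂ > 0 such that for all integers 0 ≤ n ≤ ℓ with n ≡ ℓ (mod 2), c₁ · √ℓ / ((1+ℓ+n)^{1/4}(1+ℓ−n)^{1/4}) ≤ |Y_ℓ^n(0)| ≤ c₂ · √ℓ / ((1+ℓ+n)^{1/4}(1+ℓ−n)^{1/4}), where Y_ℓ^n(0)² = (2ℓ+1)(ℓ+n+2)(ℓ−n+2) C_{(ℓ+n)/2} C_{(ℓ−n)/2} / (4^{ℓ+2} π) and C_m = (1/(m+1))·binom(2m, m) is the m-th Catalan number. -/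
open Real
open Nat (centralBinom succ_mul_centralBinom_succ)

/-!
Write `ℓ = a + b` and `n = a - b`. Since `(m + 1) C_m = binom(2m, m)`, the square of `Y_ℓ^n(0)` is
`(2ℓ + 1) r_a r_b / (4π)` with `r_m = binom(2m, m) / 4^m`, and `1 + ℓ + n = 2a + 1`,
`1 + ℓ - n = 2b + 1`. The estimate then follows from the two-sided Wallis-type bound
`1 / √(4m + 1) ≤ r_m ≤ 1 / √(2m + 1)`, which is proved by induction on `m` from
`r_{m+1} = r_m (2m + 1) / (2m + 2)`.
-/

theorem sq_four_pow_le_mul_sq_centralBinom (m : ℕ) :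
    (4 ^ m) ^ 2 ≤ (4 * m + 1) * centralBinom m ^ 2 := by
  induction m with
  | zero => simp
  | succ m ih =>
    refine Nat.le_of_mul_le_mul_left ?_ (by positivity : 0 < (m + 1) ^ 2)
    calc (m + 1) ^ 2 * (4 ^ (m + 1)) ^ 2 = 16 * (m + 1) ^ 2 * (4 ^ m) ^ 2 := by ring
      _ ≤ 16 * (m + 1) ^ 2 * ((4 * m + 1) * centralBinom m ^ 2) := by gcongr
      _ ≤ 4 * (4 * m + 5) * (2 * m + 1) ^ 2 * centralBinom m ^ 2 := by
        rw [← mul_assoc]; exact Nat.mul_le_mul_right _ (by nlinarith)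
      _ = (m + 1) ^ 2 * ((4 * (m + 1) + 1) * centralBinom (m + 1) ^ 2) := by
        rw [show (m + 1) ^ 2 * ((4 * (m + 1) + 1) * centralBinom (m + 1) ^ 2)
            = (4 * m + 5) * ((m + 1) * centralBinom (m + 1)) ^ 2 by ring,
          succ_mul_centralBinom_succ]
        ring

theorem mul_sq_centralBinom_le_sq_four_pow (m : ℕ) :
    (2 * m + 1) * centralBinom m ^ 2 ≤ (4 ^ m) ^ 2 := by
  induction m with
  | zero => simp
  | succ m ih =>
    refine Nat.le_of_mul_le_mul_left ?_ (by positivity : 0 < (m + 1) ^ 2)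
    calc (m + 1) ^ 2 * ((2 * (m + 1) + 1) * centralBinom (m + 1) ^ 2)
        = (2 * m + 3) * ((m + 1) * centralBinom (m + 1)) ^ 2 := by ring
      _ = 4 * (2 * m + 3) * (2 * m + 1) * ((2 * m + 1) * centralBinom m ^ 2) := by
        rw [succ_mul_centralBinom_succ]; ring
      _ ≤ 4 * (2 * m + 3) * (2 * m + 1) * (4 ^ m) ^ 2 := by gcongr
      _ ≤ 16 * (m + 1) ^ 2 * (4 ^ m) ^ 2 := Nat.mul_le_mul_right _ (by nlinarith)
      _ = (m + 1) ^ 2 * (4 ^ (m + 1)) ^ 2 := by ring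

theorem centralBinom_div_four_pow_le (m : ℕ) :
    (centralBinom m : ℝ) / 4 ^ m ≤ 1 / √(2 * m + 1) := by
  rw [div_le_div_iff₀ (by positivity) (by positivity), one_mul]
  refine (pow_le_pow_iff_left₀ (by positivity) (by positivity) two_ne_zero).mp ?_
  rw [mul_pow, Real.sq_sqrt (by positivity), mul_comm]
  exact_mod_cast mul_sq_centralBinom_le_sq_four_pow m

theorem one_div_sqrt_le_centralBinom_div_four_pow (m : ℕ) :
    1 / (√2 * √(2 * m + 1)) ≤ (centralBinom m : ℝ) / 4 ^ m := by
  rw [div_le_div_iff₀ (by positivity) (by positivity), one_mul]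
  refine (pow_le_pow_iff_left₀ (by positivity) (by positivity) two_ne_zero).mp ?_
  rw [mul_pow, mul_pow, Real.sq_sqrt (by positivity), Real.sq_sqrt (by positivity)]
  calc ((4 : ℝ) ^ m) ^ 2 ≤ (4 * m + 1) * centralBinom m ^ 2 := by
        exact_mod_cast sq_four_pow_le_mul_sq_centralBinom m
    _ ≤ (centralBinom m : ℝ) ^ 2 * (2 * (2 * m + 1)) := by
        nlinarith [sq_nonneg (centralBinom m : ℝ)]

theorem cast_catalan_eq_centralBinom_div (m : ℕ) :
    (catalan m : ℝ) = centralBinom m / (m + 1) := by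
  rw [eq_div_iff (by positivity), mul_comm, ← succ_mul_catalan_eq_centralBinom]
  push_cast; ring

noncomputable def sphericalHarmonicSqAtZero (ℓ n : ℕ) : ℝ :=
  ((2 * ℓ + 1 : ℝ) * (ℓ + n + 2 : ℝ) * ((ℓ : ℝ) - n + 2) *
    (catalan ((ℓ + n) / 2) : ℝ) * (catalan ((ℓ - n) / 2) : ℝ)) / (4 ^ (ℓ + 2) * π)

theorem sphericalHarmonicSqAtZero_add_sub {a b : ℕ} (hba : b ≤ a) :
    sphericalHarmonicSqAtZero (a + b) (a - b) =
      (2 * (a + b) + 1) * ((centralBinom a : ℝ) / 4 ^ a) * ((centralBinom b : ℝ) / 4 ^ b) /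
        (4 * π) := by
  have ha : (a + b + (a - b)) / 2 = a := by omega
  have hb : (a + b - (a - b)) / 2 = b := by omega
  rw [sphericalHarmonicSqAtZero, ha, hb, cast_catalan_eq_centralBinom_div,
    cast_catalan_eq_centralBinom_div, Nat.cast_sub hba]
  push_cast
  field_simp
  ring

theorem centralBinom_div_four_pow_mul_bounds (a b : ℕ) (hab : 1 ≤ a + b) :
    1 / (4 * π) * (a + b) / (√(2 * a + 1) * √(2 * b + 1)) ≤
        (2 * (a + b) + 1) * ((centralBinom a : ℝ) / 4 ^ a) * ((centralBinom b : ℝ) / 4 ^ b) /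
          (4 * π) ∧
      (2 * (a + b) + 1) * ((centralBinom a : ℝ) / 4 ^ a) * ((centralBinom b : ℝ) / 4 ^ b) /
          (4 * π) ≤
        3 / (4 * π) * (a + b) / (√(2 * a + 1) * √(2 * b + 1)) := by
  have hL : (1 : ℝ) ≤ a + b := by exact_mod_cast hab
  constructor
  · calc 1 / (4 * π) * (a + b) / (√(2 * a + 1) * √(2 * b + 1))
        = 2 * (a + b) * (1 / (√2 * √(2 * a + 1))) * (1 / (√2 * √(2 * b + 1))) / (4 * π) := by
          field_simp; rw [Real.sq_sqrt zero_le_two]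
      _ ≤ _ := by
        gcongr ?_ * ?_ * ?_ / _
        · linarith
        · exact one_div_sqrt_le_centralBinom_div_four_pow a
        · exact one_div_sqrt_le_centralBinom_div_four_pow b
  · calc _ ≤ 3 * (a + b) * (1 / √(2 * a + 1)) * (1 / √(2 * b + 1)) / (4 * π) := by
          gcongr ?_ * ?_ * ?_ / _
          · linarith
          · exact centralBinom_div_four_pow_le a
          · exact centralBinom_div_four_pow_le b
      _ = 3 / (4 * π) * (a + b) / (√(2 * a + 1) * √(2 * b + 1)) := by
          field_simp

theorem sqrt_mul_sqrt_div_rpow_mul_rpow {c y z : ℝ} (x : ℝ) (hc : 0 ≤ c) (hy : 0 ≤ y)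
    (hz : 0 ≤ z) :
    √c * √x / (y ^ (1 / 4 : ℝ) * z ^ (1 / 4 : ℝ)) = √(c * x / (√y * √z)) := by
  have quarter {t : ℝ} (ht : 0 ≤ t) : t ^ (1 / 4 : ℝ) = √(√t) := by
    rw [Real.sqrt_eq_rpow, Real.sqrt_eq_rpow, ← Real.rpow_mul ht]
    norm_num
  rw [Real.sqrt_div' _ (by positivity), Real.sqrt_mul hc, Real.sqrt_mul (Real.sqrt_nonneg _),
    quarter hy, quarter hz]

theorem sqrt_sphericalHarmonicSqAtZero_bounds (ℓ n : ℕ) (hℓ : 1 ≤ ℓ) (hnℓ : n ≤ ℓ)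
    (hpar : n % 2 = ℓ % 2) :
    √(1 / (4 * π)) * √ℓ / ((1 + ℓ + n : ℝ) ^ (1 / 4 : ℝ) * (1 + ℓ - n : ℝ) ^ (1 / 4 : ℝ)) ≤
        √(sphericalHarmonicSqAtZero ℓ n) ∧
      √(sphericalHarmonicSqAtZero ℓ n) ≤
        √(3 / (4 * π)) * √ℓ / ((1 + ℓ + n : ℝ) ^ (1 / 4 : ℝ) * (1 + ℓ - n : ℝ) ^ (1 / 4 : ℝ)) := by
  obtain ⟨a, b, hba, rfl, rfl⟩ : ∃ a b, b ≤ a ∧ ℓ = a + b ∧ n = a - b :=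
    ⟨(ℓ + n) / 2, (ℓ - n) / 2, by omega, by omega, by omega⟩
  obtain ⟨hlower, hupper⟩ := centralBinom_div_four_pow_mul_bounds a b hℓ
  rw [sphericalHarmonicSqAtZero_add_sub hba]
  push_cast [Nat.cast_sub hba]
  rw [show (1 + (a + b) + (a - b) : ℝ) = 2 * a + 1 by ring,
    show (1 + (a + b) - (a - b) : ℝ) = 2 * b + 1 by ring,
    sqrt_mul_sqrt_div_rpow_mul_rpow _ (by positivity) (by positivity) (by positivity),
    sqrt_mul_sqrt_div_rpow_mul_rpow _ (by positivity) (by positivity) (by positivity)]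
  exact ⟨Real.sqrt_le_sqrt hlower, Real.sqrt_le_sqrt hupper⟩

/-- Estimate for `|Y_ℓ^n(0)|`: there are absolute constants `c₁, c₂ > 0` such that for
all `0 ≤ n ≤ ℓ` with `n ≡ ℓ (mod 2)` (and `ℓ ≥ 1`),
`|Y_ℓ^n(0)| ≍ √ℓ / ((1+ℓ+n)^{1/4} (1+ℓ−n)^{1/4})`, where
`Y_ℓ^n(0)² = (2ℓ+1)(ℓ+n+2)(ℓ−n+2) C_{(ℓ+n)/2} C_{(ℓ−n)/2} / (4^{ℓ+2} π)` and `C_m` is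
the `m`-th Catalan number. -/
theorem stmt_6 :
    ∃ c₁ c₂ : ℝ, 0 < c₁ ∧ 0 < c₂ ∧ ∀ ℓ n : ℕ, 1 ≤ ℓ → n ≤ ℓ → n % 2 = ℓ % 2 →
      c₁ * Real.sqrt ℓ /
          (((1 + ℓ + n : ℝ)) ^ ((1:ℝ)/4) * ((1 + (ℓ : ℝ) - n)) ^ ((1:ℝ)/4)) ≤
        Real.sqrt (((2 * ℓ + 1 : ℝ) * (ℓ + n + 2 : ℝ) * ((ℓ : ℝ) - n + 2) *
            (catalan ((ℓ + n) / 2) : ℝ) * (catalan ((ℓ - n) / 2) : ℝ)) /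
          (4 ^ (ℓ + 2) * π)) ∧
      Real.sqrt (((2 * ℓ + 1 : ℝ) * (ℓ + n + 2 : ℝ) * ((ℓ : ℝ) - n + 2) *
            (catalan ((ℓ + n) / 2) : ℝ) * (catalan ((ℓ - n) / 2) : ℝ)) /
          (4 ^ (ℓ + 2) * π)) ≤
        c₂ * Real.sqrt ℓ /
          (((1 + ℓ + n : ℝ)) ^ ((1:ℝ)/4) * ((1 + (ℓ : ℝ) - n)) ^ ((1:ℝ)/4)) :=
  ⟨_, _, by positivity, by positivity, sqrt_sphericalHarmonicSqAtZero_bounds⟩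
end

section
/- Let n be a squarefree positive integer and let 𝒪 be the Hurwitz quaternion order. Let μ = xi + yj + zk ∈ 𝒪 be a trace-zero quaternion with x, y, z ∈ ℤ and x² + y² + z² = n, and let ι : ℚ(√−n) → B(ℚ) be the ℚ-algebra embedding sending √−n to μ. Then ι(ℚ(√−n)) ∩ 𝒪 = ι(O_E), where O_E is the ring of integers of E = ℚ(√−n); i.e., ι is an optimal embedding. -/
/-- The Hurwitz order `𝒪 = ℤ⟨1, i, j, (1+i+j+k)/2⟩` inside the rational Hamilton
quaternions: quaternions all of whose coordinates are half-integers of the same parity. -/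
def HurwitzOrder : Set (Quaternion ℚ) :=
  {a | ∃ w x y z : ℤ,
    a.re = (w : ℚ) / 2 ∧ a.imI = (x : ℚ) / 2 ∧ a.imJ = (y : ℚ) / 2 ∧ a.imK = (z : ℚ) / 2 ∧
    w % 2 = x % 2 ∧ w % 2 = y % 2 ∧ w % 2 = z % 2}

/-- The pure quaternion `xi + yj + zk`. -/
def pureQuat (x y z : ℚ) : Quaternion ℚ := ⟨0, x, y, z⟩

/-!
Write `a = w/2` and `2b·(x, y, z) = (p, q, r) ∈ ℤ³`. Since `n = x² + y² + z²` is squarefree,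
`(x, y, z)` is primitive, so the denominator of `2b` divides `gcd(x, y, z) = 1` and `2b = u ∈ ℤ`;
membership in `𝒪` becomes `w ≡ ux ≡ uy ≡ uz (mod 2)`. As squares are `0` or `1` mod 4,
`n ≡ 3 (mod 4)` exactly when `x, y, z` are all odd, and the condition is `w ≡ u`. Otherwise
`x, y, z` have mixed parity (not all even, by primitivity), which forces `w` and `u` to be even.
-/

lemma Int.sq_emod_four (x : ℤ) : x ^ 2 % 4 = x % 2 := by
  rcases Int.even_or_odd' x with ⟨k, rfl | rfl⟩
  · rw [show (2 * k) ^ 2 = 4 * k ^ 2 by ring]; omega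
  · rw [show (2 * k + 1) ^ 2 = 4 * (k ^ 2 + k) + 1 by ring]; omega

lemma Int.sq_add_sq_add_sq_emod_four (x y z : ℤ) :
    (x ^ 2 + y ^ 2 + z ^ 2) % 4 = (x % 2 + y % 2 + z % 2) % 4 := by
  have := x.sq_emod_four; have := y.sq_emod_four; have := z.sq_emod_four
  omega

lemma Squarefree.isUnit_of_dvd_of_sq_add_sq_add_sq {R : Type*} [CommSemiring R]
    {x y z d : R} (hn : Squarefree (x ^ 2 + y ^ 2 + z ^ 2))
    (hx : d ∣ x) (hy : d ∣ y) (hz : d ∣ z) : IsUnit d :=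
  hn d <| by
    rw [← sq]
    exact ((pow_dvd_pow_of_dvd hx 2).add (pow_dvd_pow_of_dvd hy 2)).add (pow_dvd_pow_of_dvd hz 2)

lemma Rat.den_dvd_of_mul_eq_intCast {q : ℚ} {x p : ℤ} (h : q * x = p) : (q.den : ℤ) ∣ x := by
  have hnum : q.num * x = q.den * p := by
    rw [← num_div_den q] at h
    field_simp at h
    exact_mod_cast h
  refine Int.dvd_of_dvd_mul_right_of_gcd_one (b := q.num) ⟨p, hnum⟩ ?_
  rw [Int.gcd_comm]
  exact q.reduced

lemma Rat.exists_eq_intCast_of_mul_eq_intCast {q : ℚ} {x y z : ℤ}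
    (hprim : ∀ d : ℤ, d ∣ x → d ∣ y → d ∣ z → IsUnit d) {p₁ p₂ p₃ : ℤ}
    (h₁ : q * x = p₁) (h₂ : q * y = p₂) (h₃ : q * z = p₃) : ∃ u : ℤ, q = u := by
  have hden := hprim _ (den_dvd_of_mul_eq_intCast h₁) (den_dvd_of_mul_eq_intCast h₂)
    (den_dvd_of_mul_eq_intCast h₃)
  refine ⟨q.num, ((den_eq_one_iff q).mp ?_).symm⟩
  simpa [Int.isUnit_iff] using hden

lemma coe_add_smul_pureQuat_mem_hurwitzOrder_iff (a b : ℚ) (x y z : ℤ) :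
    (a : Quaternion ℚ) + b • pureQuat x y z ∈ HurwitzOrder ↔
      ∃ w p q r : ℤ, a = w / 2 ∧ b * x = p / 2 ∧ b * y = q / 2 ∧ b * z = r / 2 ∧
        w % 2 = p % 2 ∧ w % 2 = q % 2 ∧ w % 2 = r % 2 := by
  simp only [HurwitzOrder, Set.mem_ofPred_eq, Quaternion.re_add, Quaternion.re_smul,
    Quaternion.imI_add, Quaternion.imI_smul, Quaternion.imJ_add, Quaternion.imJ_smul,
    Quaternion.imK_add, Quaternion.imK_smul]
  simp [pureQuat]

lemma coe_add_smul_pureQuat_mem_hurwitzOrder_iff_of_primitive {x y z : ℤ}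
    (hprim : ∀ d : ℤ, d ∣ x → d ∣ y → d ∣ z → IsUnit d) (a b : ℚ) :
    (a : Quaternion ℚ) + b • pureQuat x y z ∈ HurwitzOrder ↔
      ∃ w u : ℤ, a = w / 2 ∧ b = u / 2 ∧
        w % 2 = u * x % 2 ∧ w % 2 = u * y % 2 ∧ w % 2 = u * z % 2 := by
  rw [coe_add_smul_pureQuat_mem_hurwitzOrder_iff]
  constructor
  · rintro ⟨w, p, q, r, ha, hp, hq, hr, hwp, hwq, hwr⟩
    have twice (m c : ℤ) (h : b * m = c / 2) : 2 * b * m = c := by linarith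
    obtain ⟨u, hu⟩ := Rat.exists_eq_intCast_of_mul_eq_intCast hprim
      (twice x p hp) (twice y q hq) (twice z r hr)
    have hcoeff (m c : ℤ) (h : b * m = c / 2) : c = u * m := by
      have := twice m c h
      rw [hu] at this
      exact_mod_cast this.symm
    refine ⟨w, u, ha, by linarith, ?_, ?_, ?_⟩
    · rwa [← hcoeff x p hp]
    · rwa [← hcoeff y q hq]
    · rwa [← hcoeff z r hr]
  · rintro ⟨w, u, ha, hb, hx, hy, hz⟩
    exact ⟨w, u * x, u * y, u * z, ha, by rw [hb]; push_cast; ring, by rw [hb]; push_cast; ring,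
      by rw [hb]; push_cast; ring, hx, hy, hz⟩

lemma Int.emod_two_mul_eq_iff_of_odd {x y z : ℤ} (hx : x % 2 = 1) (hy : y % 2 = 1)
    (hz : z % 2 = 1) (w u : ℤ) :
    (w % 2 = u * x % 2 ∧ w % 2 = u * y % 2 ∧ w % 2 = u * z % 2) ↔ w % 2 = u % 2 := by
  simp [Int.mul_emod u, hx, hy, hz]

lemma Int.emod_two_mul_eq_iff_of_mixed_parity {x y z : ℤ}
    (hodd : ¬(x % 2 = 1 ∧ y % 2 = 1 ∧ z % 2 = 1)) (heven : ¬(x % 2 = 0 ∧ y % 2 = 0 ∧ z % 2 = 0))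
    (w u : ℤ) :
    (w % 2 = u * x % 2 ∧ w % 2 = u * y % 2 ∧ w % 2 = u * z % 2) ↔ w % 2 = 0 ∧ u % 2 = 0 := by
  rw [Int.mul_emod u x, Int.mul_emod u y, Int.mul_emod u z]
  rcases Int.emod_two_eq u with hu | hu <;>
  rcases Int.emod_two_eq x with hx | hx <;>
  rcases Int.emod_two_eq y with hy | hy <;>
  rcases Int.emod_two_eq z with hz | hz <;>
  simp [hu, hx, hy, hz] at hodd heven ⊢

lemma Rat.exists_eq_div_two_and_emod_two_eq_zero_iff (a : ℚ) :
    (∃ w : ℤ, a = w / 2 ∧ w % 2 = 0) ↔ ∃ w : ℤ, a = w := by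
  constructor
  · rintro ⟨w, rfl, hw⟩
    obtain ⟨k, rfl⟩ := Int.dvd_of_emod_eq_zero hw
    exact ⟨k, by push_cast; ring⟩
  · rintro ⟨w, rfl⟩
    exact ⟨2 * w, by push_cast; ring, by omega⟩

theorem stmt_8_general (n : ℕ) (hn : Squarefree n) (x y z : ℤ)
    (hxyz : x ^ 2 + y ^ 2 + z ^ 2 = (n : ℤ)) (a b : ℚ) :
    ((a : Quaternion ℚ) + b • pureQuat (x : ℚ) (y : ℚ) (z : ℚ) ∈ HurwitzOrder) ↔
      (if (-(n : ℤ)) % 4 = 1 then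
        ∃ w u : ℤ, a = (w : ℚ) / 2 ∧ b = (u : ℚ) / 2 ∧ w % 2 = u % 2
      else (∃ w : ℤ, a = (w : ℚ)) ∧ (∃ u : ℤ, b = (u : ℚ))) := by
  have hsq : Squarefree (x ^ 2 + y ^ 2 + z ^ 2) := hxyz ▸ Int.squarefree_natCast.mpr hn
  have hprim (d : ℤ) : d ∣ x → d ∣ y → d ∣ z → IsUnit d :=
    hsq.isUnit_of_dvd_of_sq_add_sq_add_sq
  have hmod := Int.sq_add_sq_add_sq_emod_four x y z
  rw [hxyz] at hmod
  rw [coe_add_smul_pureQuat_mem_hurwitzOrder_iff_of_primitive hprim]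
  split_ifs with h
  · have hx : x % 2 = 1 := by omega
    have hy : y % 2 = 1 := by omega
    have hz : z % 2 = 1 := by omega
    simp only [Int.emod_two_mul_eq_iff_of_odd hx hy hz]
  · have heven : ¬(x % 2 = 0 ∧ y % 2 = 0 ∧ z % 2 = 0) := fun ⟨hx, hy, hz⟩ => by
      simpa [Int.isUnit_iff] using
        hprim 2 (Int.dvd_of_emod_eq_zero hx) (Int.dvd_of_emod_eq_zero hy) (Int.dvd_of_emod_eq_zero hz)
    have hodd : ¬(x % 2 = 1 ∧ y % 2 = 1 ∧ z % 2 = 1) := by omega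
    simp only [Int.emod_two_mul_eq_iff_of_mixed_parity hodd heven,
      ← Rat.exists_eq_div_two_and_emod_two_eq_zero_iff]
    exact ⟨fun ⟨w, u, ha, hb, hw, hu⟩ => ⟨⟨w, ha, hw⟩, u, hb, hu⟩,
      fun ⟨⟨w, ha, hw⟩, u, hb, hu⟩ => ⟨w, u, ha, hb, hw, hu⟩⟩

/-- Optimality of the embedding `ι : ℚ(√−n) → B(ℚ)`, `√−n ↦ μ = xi+yj+zk` with
`x²+y²+z² = n` and `n` squarefree: an element `a + bμ` (`a, b ∈ ℚ`) of `ι(ℚ(√−n))` lies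
in the Hurwitz order iff it lies in `ι(O_E)`, where `O_E = ℤ[(1+√−n)/2]` if
`−n ≡ 1 (mod 4)` and `O_E = ℤ[√−n]` otherwise. -/
theorem stmt_8 (n : ℕ) (hn : Squarefree n) (hpos : 0 < n) (x y z : ℤ)
    (hxyz : x ^ 2 + y ^ 2 + z ^ 2 = (n : ℤ)) (a b : ℚ) :
    ((a : Quaternion ℚ) + b • pureQuat (x : ℚ) (y : ℚ) (z : ℚ) ∈ HurwitzOrder) ↔
      (if (-(n : ℤ)) % 4 = 1 then
        ∃ w u : ℤ, a = (w : ℚ) / 2 ∧ b = (u : ℚ) / 2 ∧ w % 2 = u % 2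
      else (∃ w : ℤ, a = (w : ℚ)) ∧ (∃ u : ℤ, b = (u : ℚ))) :=
  stmt_8_general n hn x y z hxyz a b
end
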